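/- With the notation above, for every integer n ≥ 2 one has (Cτ)^n = (zv)²·(v²−1−z²)^{n−2}·CH − z²·(Cτ)^{n−1} in A. -/

import Mathlib

/- R = ℤ[v^{±1}, z^{±1}] modelled as the group algebra of ℤ × ℤ over ℤ:
   the coefficient of v^i z^j in P is `P (i, j)`. -/
noncomputable section

abbrev R2 : Type := AddMonoidAlgebra ℤ (ℤ × ℤ)

/-- `v` -/
def V : R2 := AddMonoidAlgebra.single (1, 0) 1
/-- `v⁻¹` -/
def Vi : R2 := AddMonoidAlgebra.single (-1, 0) 1
/-- `z` -/
def Z : R2 := AddMonoidAlgebra.single (0, 1) 1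
/-- `z⁻¹` -/
def Zi : R2 := AddMonoidAlgebra.single (0, -1) 1
/-- `δ = (v⁻¹ - v) z⁻¹` -/
def δR : R2 := (Vi - V) * Zi

variable {A : Type*} [Ring A] [Algebra R2 A]

/-- `c = v⁻¹ σ` -/
def cOf (σ : Aˣ) : A := Vi • (σ : A)
/-- `c⁻¹ = v σ⁻¹` -/
def cInvOf (σ : Aˣ) : A := V • ((σ⁻¹ : Aˣ) : A)
/-- `C = c₁ c₃` -/
def COf (σ₁ σ₃ : Aˣ) : A := cOf σ₁ * cOf σ₃
/-- `τ = (-zv) h` -/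
def τOf (h : A) : A := (-(Z * V)) • h

/-! With X = Cτ and Y = CH the claim is the recurrence generated by
X² = (zv)²Y − z²X and XY = (v² − 1 − z²)Y. Both come from pushing h through σ₁σ₃:
the skein relation σ₃ = v²σ₃⁻¹ + vz gives hσ₁σ₃h = v²H + vz·h, and σ₃H = σ₁H together with
σ₁² = vzσ₁ + v² gives hσ₁σ₃H = (vz + v²δ)H, where zvδ = 1 − v². -/

theorem pow_eq_smul_sub_smul_pow_of_mul_self {R A : Type*} [CommRing R] [Ring A] [Algebra R A]
    {X Y : A} {a b c : R} (hXX : X * X = a • Y - b • X) (hXY : X * Y = c • Y)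
    {n : ℕ} (hn : 2 ≤ n) :
    X ^ n = (a * c ^ (n - 2)) • Y - b • X ^ (n - 1) := by
  obtain ⟨m, rfl⟩ := Nat.exists_eq_add_of_le' hn
  simp only [Nat.add_sub_cancel, Nat.add_succ_sub_one]
  clear hn
  induction m with
  | zero => simpa [pow_two] using hXX
  | succ m ih =>
    calc X ^ (m + 1 + 2) = X * X ^ (m + 2) := by rw [← pow_succ']
      _ = X * ((a * c ^ m) • Y - b • X ^ (m + 1)) := by rw [ih]
      _ = (a * c ^ (m + 1)) • Y - b • X ^ (m + 2) := by
        rw [mul_sub, mul_smul_comm, mul_smul_comm, hXY, smul_smul, mul_assoc, ← pow_succ,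
          ← pow_succ']

section SkeinRelations

variable {R A : Type*} [CommRing R] [Ring A] [Algebra R A] {v vi z δ : R}

theorem eq_smul_inv_add_of_skein (hv : v * vi = 1) {σ : Aˣ}
    (hσ : vi • (σ : A) - v • ((σ⁻¹ : Aˣ) : A) = z • 1) :
    (σ : A) = (v * v) • ((σ⁻¹ : Aˣ) : A) + (v * z) • 1 := by
  linear_combination (norm := module) v • hσ - hv • (σ : A)

theorem mul_self_eq_of_skein (hv : v * vi = 1) {σ : Aˣ}
    (hσ : vi • (σ : A) - v • ((σ⁻¹ : Aˣ) : A) = z • 1) :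
    (σ : A) * σ = (v * z) • (σ : A) + (v * v) • 1 := by
  nth_rewrite 1 [eq_smul_inv_add_of_skein hv hσ]
  rw [add_mul, smul_mul_assoc, smul_mul_assoc, Units.inv_mul, one_mul, add_comm]

variable {σ₁ σ₃ : Aˣ} {h H : A}

theorem h_mul_σ₁σ₃_mul_h (hv : v * vi = 1)
    (hσ₃ : vi • (σ₃ : A) - v • ((σ₃⁻¹ : Aˣ) : A) = z • 1)
    (hHdef : H = h * (σ₁ : A) * ((σ₃⁻¹ : Aˣ) : A) * h) (hh : h * (σ₁ : A) * h = h) :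
    h * (σ₁ : A) * σ₃ * h = (v * v) • H + (v * z) • h := by
  rw [eq_smul_inv_add_of_skein hv hσ₃]
  simp only [mul_add, add_mul, mul_smul_comm, smul_mul_assoc, mul_one]
  rw [hh, ← hHdef]

theorem h_mul_σ₁σ₃_mul_H (hv : v * vi = 1)
    (hσ₁ : vi • (σ₁ : A) - v • ((σ₁⁻¹ : Aˣ) : A) = z • 1)
    (hH1 : (σ₁ : A) * H = (σ₃ : A) * H)
    (hHdef : H = h * (σ₁ : A) * ((σ₃⁻¹ : Aˣ) : A) * h)
    (hh2 : h * h = δ • h) (hh : h * (σ₁ : A) * h = h) :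
    h * (σ₁ : A) * σ₃ * H = (v * z + v * v * δ) • H := by
  have hσ₁H : h * (σ₁ : A) * H = H := by
    rw [hHdef]; simp only [← mul_assoc]; rw [hh]
  have hhH : h * H = δ • H := by
    rw [hHdef]; simp only [← mul_assoc]; rw [hh2]; simp only [smul_mul_assoc]
  rw [mul_assoc, ← hH1, ← mul_assoc, mul_assoc h, mul_self_eq_of_skein hv hσ₁]
  simp only [mul_add, add_mul, mul_smul_comm, smul_mul_assoc, mul_one, hσ₁H, hhH, smul_smul,
    add_smul]

theorem Cτ_mul_Cτ (hv : v * vi = 1)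
    (hσ₃ : vi • (σ₃ : A) - v • ((σ₃⁻¹ : Aˣ) : A) = z • 1)
    (hHdef : H = h * (σ₁ : A) * ((σ₃⁻¹ : Aˣ) : A) * h) (hh : h * (σ₁ : A) * h = h) :
    (vi • (σ₁ : A) * vi • (σ₃ : A) * (-(z * v)) • h) *
        (vi • (σ₁ : A) * vi • (σ₃ : A) * (-(z * v)) • h) =
      (z * v) ^ 2 • (vi • (σ₁ : A) * vi • (σ₃ : A) * H) -
        z ^ 2 • (vi • (σ₁ : A) * vi • (σ₃ : A) * (-(z * v)) • h) := by
  have hx : (σ₁ : A) * σ₃ * h * (σ₁ * σ₃ * h) = σ₁ * σ₃ * (h * σ₁ * σ₃ * h) := by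
    simp only [mul_assoc]
  simp only [smul_mul_assoc, mul_smul_comm, smul_smul, hx, h_mul_σ₁σ₃_mul_h hv hσ₃ hHdef hh,
    mul_add, smul_add]
  match_scalars
  · linear_combination z ^ 2 * v ^ 2 * vi ^ 2 * (v * vi + 1) * hv
  · linear_combination z ^ 3 * v * vi ^ 2 * (v * vi + 1) * hv

theorem Cτ_mul_CH (hv : v * vi = 1)
    (hσ₁ : vi • (σ₁ : A) - v • ((σ₁⁻¹ : Aˣ) : A) = z • 1)
    (hH1 : (σ₁ : A) * H = (σ₃ : A) * H)
    (hHdef : H = h * (σ₁ : A) * ((σ₃⁻¹ : Aˣ) : A) * h)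
    (hh2 : h * h = δ • h) (hh : h * (σ₁ : A) * h = h) :
    (vi • (σ₁ : A) * vi • (σ₃ : A) * (-(z * v)) • h) * (vi • (σ₁ : A) * vi • (σ₃ : A) * H) =
      (-(z ^ 2 + z * v * δ)) • (vi • (σ₁ : A) * vi • (σ₃ : A) * H) := by
  have hxy : (σ₁ : A) * σ₃ * h * (σ₁ * σ₃ * H) = σ₁ * σ₃ * (h * σ₁ * σ₃ * H) := by
    simp only [mul_assoc]
  simp only [smul_mul_assoc, mul_smul_comm, smul_smul, hxy,
    h_mul_σ₁σ₃_mul_H hv hσ₁ hH1 hHdef hh2 hh]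
  match_scalars
  linear_combination -(vi ^ 2 * z * (v * δ + z) * (v * vi + 1)) * hv

end SkeinRelations

theorem V_mul_Vi : V * Vi = 1 := by
  rw [V, Vi, AddMonoidAlgebra.single_mul_single]
  rfl

theorem Z_mul_Zi : Z * Zi = 1 := by
  rw [Z, Zi, AddMonoidAlgebra.single_mul_single]
  rfl

theorem neg_sq_add_Z_mul_V_mul_δR : -(Z ^ 2 + Z * V * δR) = V ^ 2 - 1 - Z ^ 2 := by
  rw [δR]
  linear_combination (V ^ 2 - V * Vi) * Z_mul_Zi - V_mul_Vi

theorem statement4_general (A : Type*) [Ring A] [Algebra R2 A]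
    (σ₁ σ₃ : Aˣ) (h H : A)
    (hskein1 : Vi • (σ₁ : A) - V • ((σ₁⁻¹ : Aˣ) : A) = Z • (1 : A))
    (hskein3 : Vi • (σ₃ : A) - V • ((σ₃⁻¹ : Aˣ) : A) = Z • (1 : A))
    (hH1 : (σ₁ : A) * H = (σ₃ : A) * H)
    (hHdef : H = h * (σ₁ : A) * ((σ₃⁻¹ : Aˣ) : A) * h)
    (hh2 : h * h = δR • h)
    (hh : h * (σ₁ : A) * h = h)
    (n : ℕ) (hn : 2 ≤ n) :
    (COf σ₁ σ₃ * τOf h) ^ n =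
      ((Z * V) ^ 2 * (V ^ 2 - 1 - Z ^ 2) ^ (n - 2)) • (COf σ₁ σ₃ * H)
        - (Z ^ 2) • (COf σ₁ σ₃ * τOf h) ^ (n - 1) := by
  refine pow_eq_smul_sub_smul_pow_of_mul_self (Cτ_mul_Cτ V_mul_Vi hskein3 hHdef hh) ?_ hn
  rw [← neg_sq_add_Z_mul_V_mul_δR]
  exact Cτ_mul_CH V_mul_Vi hskein1 hH1 hHdef hh2 hh

theorem statement4 (A : Type*) [Ring A] [Algebra R2 A]
    (σ₁ σ₃ : Aˣ) (h H : A)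
    (hcomm : (σ₁ : A) * σ₃ = (σ₃ : A) * σ₁)
    (hskein1 : Vi • (σ₁ : A) - V • ((σ₁⁻¹ : Aˣ) : A) = Z • (1 : A))
    (hskein3 : Vi • (σ₃ : A) - V • ((σ₃⁻¹ : Aˣ) : A) = Z • (1 : A))
    (hH1 : (σ₁ : A) * H = (σ₃ : A) * H)
    (hH2 : H * (σ₁ : A) = H * (σ₃ : A))
    (hHdef : H = h * (σ₁ : A) * ((σ₃⁻¹ : Aˣ) : A) * h)
    (hh2 : h * h = δR • h)
    (hh : h * (σ₁ : A) * h = h)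
    (n : ℕ) (hn : 2 ≤ n) :
    (COf σ₁ σ₃ * τOf h) ^ n =
      ((Z * V) ^ 2 * (V ^ 2 - 1 - Z ^ 2) ^ (n - 2)) • (COf σ₁ σ₃ * H)
        - (Z ^ 2) • (COf σ₁ σ₃ * τOf h) ^ (n - 1) :=
  statement4_general A σ₁ σ₃ h H hskein1 hskein3 hH1 hHdef hh2 hh n hn
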